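/- arXiv:0706.4072 — 4 statements merged into one kernel-verified Lean document; each statement's English description precedes it below -/
import Mathlib

section
/- The only ℂ-subspaces of S that are invariant under all of the operators M_n and D_n (n ∈ I) are {0} and S itself; that is, S is an irreducible module for the Heisenberg Lie algebra of operators spanned by the identity, the M_n, and the D_n. -/
/-!
Setup: `I = {1/2, 3/2, 5/2, …}` is encoded by `ℕ`, with `k : ℕ` corresponding to the
half-odd integer `n = k + 1/2 = (2k+1)/2 ∈ I`.  Half-integers `r ∈ (1/2)ℤ` are encoded
by their doubles `2r ∈ ℤ` (so `r ≥ 0` iff its code is `≥ 0`, and the elements of `I`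
are coded by the odd positive integers `2k+1`).  `Sp = MvPolynomial ℕ ℂ` is the
polynomial algebra `ℂ[y_{1/2}, y_{3/2}, …]`, where `X k` is `y_{k+1/2}`.
-/

open MvPolynomial

noncomputable section

abbrev Sp : Type := MvPolynomial ℕ ℂ

/-- `Mop k` : multiplication by `y_{k+1/2}`. -/
def Mop (k : ℕ) : Module.End ℂ Sp := LinearMap.mulLeft ℂ (X k)

/-- `Dop k` : the formal partial derivative `∂/∂y_{k+1/2}`. -/
def Dop (k : ℕ) : Module.End ℂ Sp := (pderiv k).toLinearMap

/-- The (finite) set of tuples `(n₁, …, n_j) ∈ I^j` with `n₁ + ⋯ + n_j = r`, where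
`r` is coded by `R = 2r ∈ ℕ` and `nᵢ = f i + 1/2` is coded by `f i : ℕ`
(so the doubled constraint reads `∑ᵢ (2 f i + 1) = R`). -/
def tuples (j R : ℕ) : Finset (Fin j → ℕ) :=
  (Fintype.piFinset fun _ : Fin j => Finset.range (R + 1)).filter
    fun f => ∑ i, (2 * f i + 1) = R

/-- `p R` : the coefficient of `x^r` (with `R = 2r`) in `exp(∑_{n∈I} (y_n/n) x^n)`, i.e.
`∑_{j≥0} (1/j!) ∑_{(n₁,…,n_j)∈I^j, ∑nᵢ=r} ∏ᵢ (y_{nᵢ}/nᵢ)`; here `1/nᵢ = 2/(2 f i + 1)`.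
(Terms with `j > R` vanish since each `nᵢ ≥ 1/2`.) -/
def pcoef (R : ℕ) : Sp :=
  ∑ j ∈ Finset.range (R + 1), ((j.factorial : ℂ))⁻¹ •
    ∑ f ∈ tuples j R, ∏ i, (C ((2 : ℂ) / (2 * (f i : ℂ) + 1)) * X (f i))

/-- `dcoef R` : the coefficient of `x^{-r}` (with `R = 2r ≥ 0`) in
`exp(−2 ∑_{n∈I} D_n x^{−n})`, i.e.
`∑_{j≥0} ((−2)^j/j!) ∑_{(n₁,…,n_j)∈I^j, ∑nᵢ=r} D_{n₁}∘⋯∘D_{n_j}`. -/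
def dcoef (R : ℕ) : Module.End ℂ Sp :=
  ∑ j ∈ Finset.range (R + 1), (((-2 : ℂ)) ^ j * ((j.factorial : ℂ))⁻¹) •
    ∑ f ∈ tuples j R, (List.ofFn fun i => Dop (f i)).prod

/-- `dz r` for `r ∈ (1/2)ℤ` (coded by `2r ∈ ℤ`): equal to `dcoef` for `r ≥ 0`,
and (conventionally) `0` for `r < 0`. -/
def dz (r : ℤ) : Module.End ℂ Sp := if 0 ≤ r then dcoef r.toNat else 0

/-- The operator `A_j` (with `j ∈ (1/2)ℤ` coded by `J = 2j ∈ ℤ`), applied to `q`: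
`A_j q = ∑_{r ≥ max(0,−j)} p_r · (d_{r+j} q)`, a locally finite sum. -/
def Afun (J : ℤ) (q : Sp) : Sp := ∑ᶠ R : ℕ, pcoef R * (dz ((R : ℤ) + J) q)

/-!
Differentiating a nonzero polynomial in a variable that occurs in it lowers the total degree
without killing it (the characteristic is zero), so a subspace stable under all `∂/∂y_n`
that contains a nonzero polynomial contains a nonzero constant, hence `1`.  Multiplying `1`
by the variables then generates every polynomial.
-/

namespace MvPolynomial

variable {σ : Type*}

theorem totalDegree_pderiv_le {R : Type*} [CommSemiring R] (i : σ) (p : MvPolynomial σ R) :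
    (pderiv i p).totalDegree ≤ p.totalDegree - 1 := by
  refine Finset.sup_le fun u hu => ?_
  have hcoeff : coeff (u + Finsupp.single i 1) p ≠ 0 := by
    intro h
    rw [mem_support_iff, coeff_pderiv, h, zero_mul] at hu
    exact hu rfl
  have hdeg := le_totalDegree (mem_support_iff.mpr hcoeff)
  rw [Finsupp.sum_add_index' (fun _ => rfl) (fun _ _ _ => rfl),
    Finsupp.sum_single_index rfl] at hdeg
  omega

theorem exists_pderiv_ne_zero_of_totalDegree_ne_zero {R : Type*} [CommSemiring R]
    [NoZeroDivisors R] [CharZero R] {p : MvPolynomial σ R} (hp : p.totalDegree ≠ 0) :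
    ∃ i, pderiv i p ≠ 0 := by
  obtain ⟨m, hm, i, hmi⟩ : ∃ m ∈ p.support, ∃ i, m i ≠ 0 := by
    by_contra! h
    exact hp ((totalDegree_eq_zero_iff σ p).mpr h)
  refine ⟨i, fun h => ?_⟩
  have hcoeff := congrArg (coeff (m - Finsupp.single i 1)) h
  rw [coeff_pderiv, tsub_add_cancel_of_le (Finsupp.single_le_iff.mpr
    (Nat.one_le_iff_ne_zero.mpr hmi)), coeff_zero, mul_eq_zero] at hcoeff
  exact hcoeff.elim (mem_support_iff.mp hm) (Nat.cast_add_one_ne_zero _)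

theorem one_mem_of_forall_pderiv_mem {K : Type*} [Field K] [CharZero K]
    {W : Submodule K (MvPolynomial σ K)} (hD : ∀ i, ∀ w ∈ W, pderiv i w ∈ W)
    {p : MvPolynomial σ K} (hpW : p ∈ W) (hp : p ≠ 0) : (1 : MvPolynomial σ K) ∈ W := by
  induction hn : p.totalDegree using Nat.strong_induction_on generalizing p with
  | _ n ih =>
  by_cases h0 : p.totalDegree = 0
  · obtain ⟨c, rfl⟩ : ∃ c, p = C c := ⟨_, totalDegree_eq_zero_iff_eq_C.mp h0⟩
    have hc : c ≠ 0 := fun hc => hp (by rw [hc, C_0])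
    have hunit : c⁻¹ • C c = (1 : MvPolynomial σ K) := by
      rw [smul_eq_C_mul, ← C_mul, inv_mul_cancel₀ hc, C_1]
    exact hunit ▸ W.smul_mem _ hpW
  · obtain ⟨i, hi⟩ := exists_pderiv_ne_zero_of_totalDegree_ne_zero h0
    have hlt : (pderiv i p).totalDegree < n := by
      have := totalDegree_pderiv_le i p
      omega
    exact ih _ hlt (hD i p hpW) hi rfl

theorem eq_top_of_one_mem_of_forall_X_mul_mem {R : Type*} [CommSemiring R]
    {W : Submodule R (MvPolynomial σ R)} (hX : ∀ i, ∀ w ∈ W, X i * w ∈ W)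
    (h1 : (1 : MvPolynomial σ R) ∈ W) : W = ⊤ := by
  refine Submodule.eq_top_iff'.mpr fun q => ?_
  induction q using MvPolynomial.induction_on with
  | C a => simpa [smul_eq_C_mul] using W.smul_mem a h1
  | add f g hf hg => exact W.add_mem hf hg
  | mul_X f i hf => simpa [mul_comm] using hX i f hf

end MvPolynomial

/-- The only ℂ-subspaces of `S` invariant under all the operators
`M_n` and `D_n` (`n ∈ I`) are `{0}` and `S` itself; i.e. `S` is an irreducible module
for the Heisenberg Lie algebra spanned by the identity, the `M_n`, and the `D_n`. -/
theorem statement4 (W : Submodule ℂ Sp)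
    (hM : ∀ k : ℕ, ∀ w ∈ W, Mop k w ∈ W)
    (hD : ∀ k : ℕ, ∀ w ∈ W, Dop k w ∈ W) :
    W = ⊥ ∨ W = ⊤ := by
  refine or_iff_not_imp_left.mpr fun hW => ?_
  obtain ⟨p, hpW, hp⟩ := W.ne_bot_iff.mp hW
  exact eq_top_of_one_mem_of_forall_X_mul_mem hM (one_mem_of_forall_pderiv_mem hD hpW hp)

end
end

section
/- First Rogers–Ramanujan identity (generating-function form, coefficientwise): for every natural number N, the coefficient of q^N in the formal power series ∏_{1 ≤ m ≤ N, m ≡ 1 or 4 (mod 5)} (1 − q^m)^{−1} ∈ ℤ⟦q⟧ equals Σ_{n ≥ 0, n² ≤ N} (coefficient of q^N in q^{n²} · ∏_{i=1}^{n} (1 − q^i)^{−1}). -/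
/-!
Multiplied by `(q; q)_N`, both sides become, modulo `q ^ (N + 1)`, the theta series
`∑ₖ (-1)ᵏ q^(k(5k+1)/2)`, which we split into the terms `k = 2i` and `k = 2i + 1`.

Sum side (Schur): the polynomials `Dₙ = ∑ₖ q^(k²) [n-k, k]` and the alternating sums
`Sₙ = ∑ᵢ (q^(i(10i+1)) [n, ⌊n/2⌋ - 5i] - q^((2i+1)(5i+3)) [n, ⌊(n+1)/2⌋ - 3 - 5i])` both satisfy
`f (n + 2) = f (n + 1) + q^(n+1) f n` and agree for `n ≤ 1`, so `Dₙ = Sₙ`. As `n → ∞`,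
`[n-k, k] → 1 / (q; q)ₖ` and `(q; q)ₙ [n, a] → 1` when `a` and `n - a` are large, so
`(q; q)_∞ ∑ₖ q^(k²) / (q; q)ₖ` is the theta series.

Product side (a finite Jacobi triple product in base `q⁵`): the alternating sum
`∑ᵢ (q^(i(10i+1)) [2m, m+2i]_{q⁵} - q^((2i+1)(5i+3)) [2m, m+2i+1]_{q⁵})` gains the factor
`(1 - q^(5m+2)) (1 - q^(5m+3))` from `m` to `m + 1`. Multiplied by `(q⁵; q⁵)_∞`, it tends both to
the theta series and to `∏_{j ≢ ±1 (mod 5)} (1 - q^j) = (q; q)_∞ ∏_{j ≡ ±1 (mod 5)} (1 - q^j)⁻¹`.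

In both recurrences the identity holds termwise in `i` up to a telescoping difference, after
expanding the Gaussian binomials twice by the two `q`-Pascal rules.
-/

open PowerSeries Finset

noncomputable section

namespace RogersRamanujan

variable {R : Type*} [CommRing R]

section Identities

variable (q : R)

/-! ### Gaussian binomial coefficients -/

def gaussBinom : ℕ → ℕ → R
  | _, 0 => 1
  | 0, _ + 1 => 0
  | n + 1, k + 1 => gaussBinom n (k + 1) + q ^ (n - k) * gaussBinom n k

def qPoch (n : ℕ) : R := ∏ i ∈ Icc 1 n, (1 - q ^ i)

@[simp] lemma gaussBinom_zero_right (n : ℕ) : gaussBinom q n 0 = 1 := by cases n <;> rfl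

@[simp] lemma gaussBinom_zero_succ (k : ℕ) : gaussBinom q 0 (k + 1) = 0 := rfl

lemma gaussBinom_succ_succ (n k : ℕ) :
    gaussBinom q (n + 1) (k + 1) = gaussBinom q n (k + 1) + q ^ (n - k) * gaussBinom q n k :=
  rfl

lemma gaussBinom_eq_zero_of_lt {n k : ℕ} (h : n < k) : gaussBinom q n k = 0 := by
  induction n generalizing k with
  | zero => obtain ⟨k, rfl⟩ := Nat.exists_eq_succ_of_ne_zero (by omega : k ≠ 0); rfl
  | succ n ih =>
    obtain ⟨k, rfl⟩ := Nat.exists_eq_succ_of_ne_zero (by omega : k ≠ 0)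
    rw [gaussBinom_succ_succ, ih (by omega), ih (by omega), mul_zero, add_zero]

lemma pow_mul_gaussBinom_congr {a b n k : ℕ} (h : k ≤ n → a = b) :
    q ^ a * gaussBinom q n k = q ^ b * gaussBinom q n k := by
  rcases le_or_gt k n with hk | hk
  · rw [h hk]
  · simp [gaussBinom_eq_zero_of_lt q hk]

lemma gaussBinom_succ_succ' (n k : ℕ) :
    gaussBinom q (n + 1) (k + 1) = q ^ (k + 1) * gaussBinom q n (k + 1) + gaussBinom q n k := by
  induction n generalizing k with
  | zero => cases k <;> simp [gaussBinom_succ_succ, gaussBinom_eq_zero_of_lt]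
  | succ n ih =>
    cases k with
    | zero =>
      have h₂ := gaussBinom_succ_succ q (n + 1) 0
      have h₁ := gaussBinom_succ_succ q n 0
      have ih₀ := ih 0
      simp only [gaussBinom_zero_right, Nat.sub_zero, mul_one] at h₂ h₁ ih₀ ⊢
      linear_combination h₂ + ih₀ - q * h₁
    | succ j =>
      have h₂ := gaussBinom_succ_succ q (n + 1) (j + 1)
      rw [Nat.add_sub_add_right] at h₂
      have hexp := pow_mul_gaussBinom_congr q (n := n) (k := j + 1)
        (a := n - j + (j + 1)) (b := j + 2 + (n - (j + 1))) (by omega)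
      rw [pow_add, pow_add] at hexp
      linear_combination h₂ + ih (j + 1) + q ^ (n - j) * ih j
        - q ^ (j + 2) * gaussBinom_succ_succ q n (j + 1) - gaussBinom_succ_succ q n j + hexp

lemma qPoch_succ (n : ℕ) : qPoch q (n + 1) = qPoch q n * (1 - q ^ (n + 1)) :=
  prod_Icc_succ_top (by omega) _

lemma qPoch_mul_prod_Ioc {k P : ℕ} (h : k ≤ P) :
    qPoch q k * ∏ i ∈ Ioc k P, (1 - q ^ i) = qPoch q P := by
  have hI : ∀ n : ℕ, Icc 1 n = Ioc 0 n := fun n => Icc_add_one_left_eq_Ioc 0 n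
  rw [qPoch, qPoch, hI, hI, prod_Ioc_consecutive _ (Nat.zero_le k) h]

lemma qPoch_mul_prod_filter_inv {N : ℕ} (p : ℕ → Prop) [DecidablePred p] {inv : ℕ → R}
    (hinv : ∀ m, 1 ≤ m → (1 - q ^ m) * inv m = 1) :
    qPoch q N * ∏ m ∈ (Icc 1 N).filter p, inv m =
      ∏ m ∈ (Icc 1 N).filter (fun m => ¬p m), (1 - q ^ m) := by
  have h : ∏ m ∈ (Icc 1 N).filter p, ((1 - q ^ m) * inv m) = 1 :=
    prod_eq_one fun m hm => hinv m (mem_Icc.1 (mem_filter.1 hm).1).1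
  rw [qPoch, ← prod_filter_mul_prod_filter_not (Icc 1 N) p, mul_right_comm, ← prod_mul_distrib,
    h, one_mul]

/-- For `k > n` both sides vanish: the product on the right contains the factor `1 - q ^ 0`. -/
lemma qPoch_mul_gaussBinom (n k : ℕ) :
    qPoch q k * gaussBinom q n k = ∏ j ∈ range k, (1 - q ^ (n - j)) := by
  induction n generalizing k with
  | zero => cases k <;> simp [qPoch, gaussBinom]
  | succ n ih =>
    cases k with
    | zero => simp [qPoch]
    | succ j =>
      have ih₁ := ih (j + 1)
      rw [qPoch_succ, prod_range_succ] at ih₁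
      set F := ∏ i ∈ range j, (1 - q ^ (n - i))
      have hexp : F * q ^ (j + 1) * q ^ (n - j) = F * q ^ (n + 1) := by
        rcases le_or_gt j n with hj | hj
        · rw [mul_assoc, ← pow_add]; congr 2; omega
        · simp [show F = 0 from prod_eq_zero (mem_range.2 hj) (by simp)]
      rw [gaussBinom_succ_succ', qPoch_succ, prod_range_succ']
      simp only [Nat.add_sub_add_right, Nat.sub_zero]
      linear_combination q ^ (j + 1) * ih₁ + (1 - q ^ (j + 1)) * ih j - hexp

def gaussBinomZ (n : ℕ) (a : ℤ) : R := if 0 ≤ a then gaussBinom q n a.toNat else 0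

variable {q}

lemma gaussBinomZ_of_neg {n : ℕ} {a : ℤ} (h : a < 0) : gaussBinomZ q n a = 0 := by
  simp [gaussBinomZ, not_le.2 h]

lemma gaussBinomZ_of_lt {n : ℕ} {a : ℤ} (h : n < a) : gaussBinomZ q n a = 0 := by
  rw [gaussBinomZ, if_pos (by omega), gaussBinom_eq_zero_of_lt q (by omega)]

@[simp] lemma gaussBinomZ_natCast (n k : ℕ) : gaussBinomZ q n k = gaussBinom q n k := by
  simp [gaussBinomZ]

@[simp] lemma gaussBinomZ_zero (n : ℕ) : gaussBinomZ q n 0 = 1 := by simp [gaussBinomZ]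

lemma mul_gaussBinomZ_congr {n : ℕ} {a : ℤ} {x y : R} (h : 0 ≤ a → a ≤ n → x = y) :
    x * gaussBinomZ q n a = y * gaussBinomZ q n a := by
  by_cases ha : 0 ≤ a ∧ a ≤ n
  · rw [h ha.1 ha.2]
  · rcases not_and_or.1 ha with ha | ha
    · simp [gaussBinomZ_of_neg (not_le.1 ha)]
    · simp [gaussBinomZ_of_lt (not_le.1 ha)]

lemma pow_mul_pow_mul_gaussBinomZ_congr (r : R) {n : ℕ} {a : ℤ} {e₁ e₂ f₁ f₂ : ℕ}
    (h : 0 ≤ a → a ≤ n → e₁ + e₂ = f₁ + f₂) :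
    r ^ e₁ * (r ^ e₂ * gaussBinomZ q n a) = r ^ f₁ * (r ^ f₂ * gaussBinomZ q n a) := by
  simp only [← mul_assoc, ← pow_add]
  exact mul_gaussBinomZ_congr fun h₀ h₁ => by rw [h h₀ h₁]

/-- The exponent is clipped by `toNat` only where the binomial it multiplies vanishes. -/
lemma gaussBinomZ_succ {n : ℕ} {a b : ℤ} (h : b + 1 = a) :
    gaussBinomZ q (n + 1) a =
      gaussBinomZ q n a + q ^ ((n : ℤ) - b).toNat * gaussBinomZ q n b := by
  obtain rfl : a = b + 1 := h.symm
  rcases lt_trichotomy b (-1) with hb | rfl | hb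
  · simp [gaussBinomZ_of_neg (show b < 0 by omega), gaussBinomZ_of_neg (show b + 1 < 0 by omega)]
  · simp [gaussBinomZ]
  obtain ⟨k, rfl⟩ := Int.eq_ofNat_of_zero_le (show 0 ≤ b by omega)
  rw [← Nat.cast_succ, gaussBinomZ_natCast, gaussBinomZ_natCast, gaussBinomZ_natCast,
    gaussBinom_succ_succ, show ((n : ℤ) - k).toNat = n - k by omega]

lemma gaussBinomZ_succ' {n : ℕ} {a b : ℤ} (h : b + 1 = a) :
    gaussBinomZ q (n + 1) a = q ^ a.toNat * gaussBinomZ q n a + gaussBinomZ q n b := by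
  obtain rfl : a = b + 1 := h.symm
  rcases lt_trichotomy b (-1) with hb | rfl | hb
  · simp [gaussBinomZ_of_neg (show b < 0 by omega), gaussBinomZ_of_neg (show b + 1 < 0 by omega)]
  · simp [gaussBinomZ]
  obtain ⟨k, rfl⟩ := Int.eq_ofNat_of_zero_le (show 0 ≤ b by omega)
  rw [← Nat.cast_succ, gaussBinomZ_natCast, gaussBinomZ_natCast, gaussBinomZ_natCast,
    gaussBinom_succ_succ', Int.toNat_natCast]

/-! ### Exponents of the theta series and sums over `[-K, K]` -/

/-- `k (5k + 1) / 2` for `k = 2i`. -/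
def evenExp (i : ℤ) : ℕ := (i * (10 * i + 1)).toNat

/-- `k (5k + 1) / 2` for `k = 2i + 1`. -/
def oddExp (i : ℤ) : ℕ := ((2 * i + 1) * (5 * i + 3)).toNat

lemma evenExp_cast (i : ℤ) : (evenExp i : ℤ) = i * (10 * i + 1) :=
  Int.toNat_of_nonneg (by rcases le_or_gt 0 i with h | h <;> nlinarith)

lemma oddExp_cast (i : ℤ) : (oddExp i : ℤ) = (2 * i + 1) * (5 * i + 3) :=
  Int.toNat_of_nonneg (by rcases le_or_gt 0 i with h | h <;> nlinarith)

lemma oddExp_cast_eq (i : ℤ) : (oddExp i : ℤ) = evenExp i + 10 * i + 3 := by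
  rw [evenExp_cast, oddExp_cast]; ring

lemma evenExp_add_one_cast_eq (i : ℤ) : (evenExp (i + 1) : ℤ) = oddExp i + 10 * i + 8 := by
  rw [evenExp_cast, oddExp_cast]; ring

lemma five_mul_le_of_evenExp_le {i : ℤ} {N : ℕ} (h : evenExp i ≤ N) :
    5 * i ≤ N ∧ -(5 * i) ≤ N := by
  have := evenExp_cast i
  rcases le_or_gt 0 i with hi | hi <;> constructor <;> nlinarith

lemma five_mul_le_of_oddExp_le {i : ℤ} {N : ℕ} (h : oddExp i ≤ N) :
    5 * i + 3 ≤ N ∧ -(5 * i) ≤ N + 3 := by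
  have := oddExp_cast i
  rcases le_or_gt 0 i with hi | hi <;> constructor <;> nlinarith

lemma sum_Icc_eq_of_vanish {M : Type*} [AddCommMonoid M] {f : ℤ → M} {K L : ℤ} (hKL : K ≤ L)
    (hf : ∀ i, K < i ∨ i < -K → f i = 0) :
    ∑ i ∈ Icc (-L) L, f i = ∑ i ∈ Icc (-K) K, f i :=
  (sum_subset (Icc_subset_Icc (by omega) hKL) fun i hi hi' => hf i (by
    simp only [mem_Icc] at hi hi'; omega)).symm

lemma sum_Icc_sub_add_one {M : Type*} [AddCommGroup M] (f : ℤ → M) (a : ℤ) (k : ℕ) :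
    ∑ i ∈ Icc a (a + k - 1), (f i - f (i + 1)) = f a - f (a + k) := by
  induction k with
  | zero => simp
  | succ k ih =>
    rw [show a + (k + 1 : ℕ) - 1 = a + k - 1 + 1 by push_cast; ring,
      ← insert_Icc_right_eq_Icc_add_one (by omega), sum_insert (by simp), ih,
      show a + k - 1 + 1 = a + k by ring, show a + ((k + 1 : ℕ) : ℤ) = a + k + 1 by push_cast; ring]
    abel

lemma sum_Icc_sub_add_one_eq_zero {M : Type*} [AddCommGroup M] {f : ℤ → M} {K : ℤ} (hK : 0 ≤ K)
    (h₁ : f (-K) = 0) (h₂ : f (K + 1) = 0) : ∑ i ∈ Icc (-K) K, (f i - f (i + 1)) = 0 := by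
  have := sum_Icc_sub_add_one f (-K) (2 * K + 1).toNat
  rwa [show -K + ((2 * K + 1).toNat : ℤ) - 1 = K by omega,
    show -K + ((2 * K + 1).toNat : ℤ) = K + 1 by omega, h₁, h₂, sub_zero] at this

/-! ### Schur's polynomial identity -/

variable (q) in
def schurTerm (n : ℕ) (i : ℤ) : R :=
  q ^ evenExp i * gaussBinomZ q n ((n / 2 : ℕ) - 5 * i) -
    q ^ oddExp i * gaussBinomZ q n (((n + 1) / 2 : ℕ) - 3 - 5 * i)

variable (q) in
def schurSum (n : ℕ) : R := ∑ i ∈ Icc (-(n : ℤ)) n, schurTerm q n i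

variable (q) in
def schurTelescope (p : ℕ) (i : ℤ) : R :=
  q ^ evenExp i * (q ^ ((p : ℤ) - 5 * i + 1).toNat * gaussBinomZ q (2 * p) (p - 5 * i + 1))

variable (q) in
def qFibonacci (n : ℕ) : R := ∑ k ∈ range (n + 1), q ^ (k ^ 2) * gaussBinom q (n - k) k

lemma schurTerm_eq_zero {n : ℕ} {i : ℤ} (h : n < i ∨ i < -n) : schurTerm q n i = 0 := by
  have h₁ : n / 2 ≤ n := Nat.div_le_self n 2
  have h₂ : (n + 1) / 2 ≤ n + 1 := Nat.div_le_self _ 2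
  rcases h with h | h
  · rw [schurTerm, gaussBinomZ_of_neg (by omega), gaussBinomZ_of_neg (by omega)]; simp
  · rw [schurTerm, gaussBinomZ_of_lt (by omega), gaussBinomZ_of_lt (by omega)]; simp

lemma schurSum_eq_sum_Icc {n : ℕ} {K : ℤ} (hK : n ≤ K) :
    schurSum q n = ∑ i ∈ Icc (-K) K, schurTerm q n i :=
  (sum_Icc_eq_of_vanish hK fun _ hi => schurTerm_eq_zero hi).symm

lemma schurTerm_two_mul_add_two (p : ℕ) (i : ℤ) :
    schurTerm q (2 * p + 2) i =
      schurTerm q (2 * p + 1) i + q ^ (2 * p + 1) * schurTerm q (2 * p) i +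
        (schurTelescope q p i - schurTelescope q p (i + 1)) := by
  simp only [schurTerm, schurTelescope, show (2 * p + 2) / 2 = p + 1 by omega,
    show (2 * p + 1) / 2 = p by omega, show 2 * p / 2 = p by omega,
    show (2 * p + 2 + 1) / 2 = p + 1 by omega]
  push_cast
  rw [show (p : ℤ) + 1 - 5 * i = p - 5 * i + 1 by ring,
    show (p : ℤ) + 1 - 3 - 5 * i = p - 5 * i - 2 by ring,
    show (p : ℤ) - 3 - 5 * i = p - 5 * i - 3 by ring,
    show (p : ℤ) - 5 * (i + 1) + 1 = p - 5 * i - 4 by ring]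
  set a : ℤ := p - 5 * i with ha
  have := evenExp_add_one_cast_eq i
  have h₁ := gaussBinomZ_succ' (q := q) (n := 2 * p + 1) (show a + 1 = a + 1 from rfl)
  have h₂ := gaussBinomZ_succ (q := q) (n := 2 * p + 1) (show a - 3 + 1 = a - 2 by ring)
  have h₃ := gaussBinomZ_succ (q := q) (n := 2 * p) (show a + 1 = a + 1 from rfl)
  have h₄ := gaussBinomZ_succ' (q := q) (n := 2 * p) (show a - 4 + 1 = a - 3 by ring)
  have c₁ : q ^ (a + 1).toNat * (q ^ (((2 * p : ℕ) : ℤ) - a).toNat * gaussBinomZ q (2 * p) a) =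
      q ^ (2 * p + 1) * (q ^ 0 * gaussBinomZ q (2 * p) a) :=
    pow_mul_pow_mul_gaussBinomZ_congr q fun _ _ => by omega
  have c₂ : q ^ (((2 * p + 1 : ℕ) : ℤ) - (a - 3)).toNat *
      (q ^ (a - 3).toNat * gaussBinomZ q (2 * p) (a - 3)) =
      q ^ (2 * p + 1) * (q ^ 0 * gaussBinomZ q (2 * p) (a - 3)) :=
    pow_mul_pow_mul_gaussBinomZ_congr q fun _ _ => by omega
  have c₃ : q ^ oddExp i *
      (q ^ (((2 * p + 1 : ℕ) : ℤ) - (a - 3)).toNat * gaussBinomZ q (2 * p) (a - 4)) =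
      q ^ evenExp (i + 1) * (q ^ (a - 4).toNat * gaussBinomZ q (2 * p) (a - 4)) :=
    pow_mul_pow_mul_gaussBinomZ_congr q fun _ _ => by omega
  rw [h₁, h₂, h₃, h₄]
  linear_combination q ^ evenExp i * c₁ - q ^ oddExp i * c₂ - c₃

lemma schurTerm_two_mul_add_three (p : ℕ) (i : ℤ) :
    schurTerm q (2 * p + 3) i =
      schurTerm q (2 * p + 2) i + q ^ (2 * p + 2) * schurTerm q (2 * p + 1) i := by
  simp only [schurTerm, show (2 * p + 3) / 2 = p + 1 by omega,
    show (2 * p + 2) / 2 = p + 1 by omega, show (2 * p + 1) / 2 = p by omega,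
    show (2 * p + 3 + 1) / 2 = p + 2 by omega]
  push_cast
  rw [show (p : ℤ) + 1 - 5 * i = p - 5 * i + 1 by ring,
    show (p : ℤ) + 2 - 3 - 5 * i = p - 5 * i - 1 by ring,
    show (p : ℤ) + 1 - 3 - 5 * i = p - 5 * i - 2 by ring]
  set a : ℤ := p - 5 * i with ha
  have := oddExp_cast_eq i
  have h₁ := gaussBinomZ_succ (q := q) (n := 2 * p + 2) (show a + 1 = a + 1 from rfl)
  have h₂ := gaussBinomZ_succ' (q := q) (n := 2 * p + 2) (show a - 2 + 1 = a - 1 by ring)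
  have h₃ := gaussBinomZ_succ' (q := q) (n := 2 * p + 1) (show a - 1 + 1 = a by ring)
  have h₄ := gaussBinomZ_succ (q := q) (n := 2 * p + 1) (show a - 2 + 1 = a - 1 by ring)
  have c₁ : q ^ (((2 * p + 2 : ℕ) : ℤ) - a).toNat *
      (q ^ a.toNat * gaussBinomZ q (2 * p + 1) a) =
      q ^ (2 * p + 2) * (q ^ 0 * gaussBinomZ q (2 * p + 1) a) :=
    pow_mul_pow_mul_gaussBinomZ_congr q fun _ _ => by omega
  have c₂ : q ^ (a - 1).toNat *
      (q ^ (((2 * p + 1 : ℕ) : ℤ) - (a - 2)).toNat * gaussBinomZ q (2 * p + 1) (a - 2)) =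
      q ^ (2 * p + 2) * (q ^ 0 * gaussBinomZ q (2 * p + 1) (a - 2)) :=
    pow_mul_pow_mul_gaussBinomZ_congr q fun _ _ => by omega
  have c₃ : q ^ evenExp i *
      (q ^ (((2 * p + 2 : ℕ) : ℤ) - a).toNat * gaussBinomZ q (2 * p + 1) (a - 1)) =
      q ^ oddExp i * (q ^ (a - 1).toNat * gaussBinomZ q (2 * p + 1) (a - 1)) :=
    pow_mul_pow_mul_gaussBinomZ_congr q fun _ _ => by omega
  rw [h₁, h₂, h₃, h₄]
  linear_combination q ^ evenExp i * c₁ - q ^ oddExp i * c₂ + c₃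

theorem schurSum_add_two (n : ℕ) :
    schurSum q (n + 2) = schurSum q (n + 1) + q ^ (n + 1) * schurSum q n := by
  rw [schurSum_eq_sum_Icc (K := n + 2) (by omega), schurSum_eq_sum_Icc (K := n + 2) (by omega),
    schurSum_eq_sum_Icc (K := n + 2) (by omega), mul_sum, ← sum_add_distrib]
  obtain ⟨p, rfl | rfl⟩ := Nat.even_or_odd' n
  · have htel : ∑ i ∈ Icc (-(((2 * p : ℕ) : ℤ) + 2)) (((2 * p : ℕ) : ℤ) + 2),
        (schurTelescope q p i - schurTelescope q p (i + 1)) = 0 := by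
      refine sum_Icc_sub_add_one_eq_zero (by omega) ?_ ?_
      · rw [schurTelescope, gaussBinomZ_of_lt (by omega), mul_zero, mul_zero]
      · rw [schurTelescope, gaussBinomZ_of_neg (by omega), mul_zero, mul_zero]
    rw [sum_congr rfl fun i _ => schurTerm_two_mul_add_two p i, sum_add_distrib, htel, add_zero]
  · exact sum_congr rfl fun i _ => schurTerm_two_mul_add_three p i

lemma schurSum_of_le_one {n : ℕ} (hn : n ≤ 1) : schurSum q n = 1 := by
  rw [schurSum, sum_eq_single_of_mem 0 (by simp)]
  · interval_cases n <;> simp [schurTerm, evenExp, gaussBinomZ_of_neg]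
  · intro i _ hi
    rcases lt_or_gt_of_ne hi with hi | hi
    · rw [schurTerm, gaussBinomZ_of_lt (by omega), gaussBinomZ_of_lt (by omega)]; simp
    · rw [schurTerm, gaussBinomZ_of_neg (by omega), gaussBinomZ_of_neg (by omega)]; simp

lemma qFibonacci_term_succ (n k : ℕ) :
    q ^ ((k + 1) ^ 2) * gaussBinom q (n + 1 - k) (k + 1) =
      q ^ ((k + 1) ^ 2) * gaussBinom q (n - k) (k + 1) +
        q ^ (n + 1) * (q ^ (k ^ 2) * gaussBinom q (n - k) k) := by
  rcases le_or_gt k n with hk | hk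
  · rw [show n + 1 - k = n - k + 1 by omega, gaussBinom_succ_succ, mul_add, ← mul_assoc,
      ← mul_assoc, ← pow_add, ← pow_add]
    congr 1
    exact pow_mul_gaussBinom_congr q fun h => by ring_nf; omega
  · simp [gaussBinom_eq_zero_of_lt q (show n + 1 - k < k + 1 by omega),
      gaussBinom_eq_zero_of_lt q (show n - k < k by omega),
      gaussBinom_eq_zero_of_lt q (show n - k < k + 1 by omega)]

theorem qFibonacci_add_two (n : ℕ) :
    qFibonacci q (n + 2) = qFibonacci q (n + 1) + q ^ (n + 1) * qFibonacci q n := by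
  have h₂ : qFibonacci q (n + 2) =
      ∑ k ∈ range (n + 2), q ^ ((k + 1) ^ 2) * gaussBinom q (n + 1 - k) (k + 1) + 1 := by
    simp [qFibonacci, sum_range_succ' _ (n + 2)]
  have h₁ : qFibonacci q (n + 1) =
      ∑ k ∈ range (n + 2), q ^ ((k + 1) ^ 2) * gaussBinom q (n - k) (k + 1) + 1 := by
    rw [qFibonacci, sum_range_succ' (fun k => q ^ (k ^ 2) * gaussBinom q (n + 1 - k) k),
      sum_range_succ _ (n + 1)]
    simp
  have h₀ : qFibonacci q n = ∑ k ∈ range (n + 2), q ^ (k ^ 2) * gaussBinom q (n - k) k := by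
    simp [qFibonacci, sum_range_succ _ (n + 1)]
  rw [h₂, h₁, h₀, mul_sum, sum_congr rfl fun k _ => qFibonacci_term_succ n k, sum_add_distrib]
  ring

theorem schurSum_eq_qFibonacci (n : ℕ) : schurSum q n = qFibonacci q n := by
  induction n using Nat.twoStepInduction with
  | zero => simp [schurSum_of_le_one, qFibonacci]
  | one => simp [schurSum_of_le_one, qFibonacci, sum_range_succ]
  | more n ih₀ ih₁ => rw [schurSum_add_two, qFibonacci_add_two, ih₀, ih₁]

/-! ### A finite Jacobi triple product -/

variable (q) in
def jacobiTerm (m : ℕ) (i : ℤ) : R :=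
  q ^ evenExp i * gaussBinomZ (q ^ 5) (2 * m) (m + 2 * i) -
    q ^ oddExp i * gaussBinomZ (q ^ 5) (2 * m) (m + 2 * i + 1)

variable (q) in
def jacobiSum (m : ℕ) : R := ∑ i ∈ Icc (-(m : ℤ)) m, jacobiTerm q m i

variable (q) in
def jacobiTelescope (m : ℕ) (i : ℤ) : R :=
  q ^ (5 * m + 3) * (q ^ oddExp (i - 1) * gaussBinomZ (q ^ 5) (2 * m) (m + 2 * i - 1)) +
    q ^ (5 * m + 2) * (q ^ evenExp i * gaussBinomZ (q ^ 5) (2 * m) (m + 2 * i))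

lemma jacobiTerm_eq_zero {m : ℕ} {i : ℤ} (h : m < i ∨ i < -m) : jacobiTerm q m i = 0 := by
  rcases h with h | h
  · rw [jacobiTerm, gaussBinomZ_of_lt (by omega), gaussBinomZ_of_lt (by omega)]; simp
  · rw [jacobiTerm, gaussBinomZ_of_neg (by omega), gaussBinomZ_of_neg (by omega)]; simp

lemma jacobiSum_eq_sum_Icc {m : ℕ} {K : ℤ} (hK : m ≤ K) :
    jacobiSum q m = ∑ i ∈ Icc (-K) K, jacobiTerm q m i :=
  (sum_Icc_eq_of_vanish hK fun _ hi => jacobiTerm_eq_zero hi).symm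

lemma jacobiTerm_succ (m : ℕ) (i : ℤ) :
    jacobiTerm q (m + 1) i = (1 - q ^ (5 * m + 2)) * (1 - q ^ (5 * m + 3)) * jacobiTerm q m i +
      (jacobiTelescope q m i - jacobiTelescope q m (i + 1)) := by
  simp only [jacobiTerm, jacobiTelescope, add_sub_cancel_right,
    show 2 * (m + 1) = 2 * m + 1 + 1 by ring]
  push_cast
  rw [show (m : ℤ) + 1 + 2 * i = m + 2 * i + 1 by ring,
    show (m : ℤ) + 2 * i + 1 + 1 = m + 2 * i + 2 by ring,
    show (m : ℤ) + 2 * (i + 1) - 1 = m + 2 * i + 1 by ring,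
    show (m : ℤ) + 2 * (i + 1) = m + 2 * i + 2 by ring]
  set a : ℤ := m + 2 * i with ha
  have := oddExp_cast_eq i
  have := evenExp_add_one_cast_eq i
  have := evenExp_add_one_cast_eq (i - 1)
  rw [sub_add_cancel] at this
  have hE₁ := gaussBinomZ_succ (q := q ^ 5) (n := 2 * m + 1) (show a + 1 = a + 1 from rfl)
  have hE₂ := gaussBinomZ_succ' (q := q ^ 5) (n := 2 * m) (show a + 1 = a + 1 from rfl)
  have hE₃ := gaussBinomZ_succ' (q := q ^ 5) (n := 2 * m) (show a - 1 + 1 = a by ring)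
  have hO₁ := gaussBinomZ_succ' (q := q ^ 5) (n := 2 * m + 1) (show a + 1 + 1 = a + 2 by ring)
  have hO₂ := gaussBinomZ_succ (q := q ^ 5) (n := 2 * m) (show a + 1 + 1 = a + 2 by ring)
  have hO₃ := gaussBinomZ_succ (q := q ^ 5) (n := 2 * m) (show a + 1 = a + 1 from rfl)
  simp only [← pow_mul] at hE₁ hE₂ hE₃ hO₁ hO₂ hO₃
  have cE₁ : q ^ evenExp i * (q ^ (5 * (a + 1).toNat) * gaussBinomZ (q ^ 5) (2 * m) (a + 1)) =
      q ^ (5 * m + 2) * (q ^ oddExp i * gaussBinomZ (q ^ 5) (2 * m) (a + 1)) :=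
    pow_mul_pow_mul_gaussBinomZ_congr q fun _ _ => by omega
  have cE₂ : q ^ (5 * (((2 * m + 1 : ℕ) : ℤ) - a).toNat) *
      (q ^ (5 * a.toNat) * gaussBinomZ (q ^ 5) (2 * m) a) =
      q ^ (10 * m + 5) * (q ^ 0 * gaussBinomZ (q ^ 5) (2 * m) a) :=
    pow_mul_pow_mul_gaussBinomZ_congr q fun _ _ => by omega
  have cE₃ : q ^ evenExp i *
      (q ^ (5 * (((2 * m + 1 : ℕ) : ℤ) - a).toNat) * gaussBinomZ (q ^ 5) (2 * m) (a - 1)) =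
      q ^ (5 * m + 3) * (q ^ oddExp (i - 1) * gaussBinomZ (q ^ 5) (2 * m) (a - 1)) :=
    pow_mul_pow_mul_gaussBinomZ_congr q fun _ _ => by omega
  have cO₁ : q ^ oddExp i * (q ^ (5 * (a + 2).toNat) * gaussBinomZ (q ^ 5) (2 * m) (a + 2)) =
      q ^ (5 * m + 2) * (q ^ evenExp (i + 1) * gaussBinomZ (q ^ 5) (2 * m) (a + 2)) :=
    pow_mul_pow_mul_gaussBinomZ_congr q fun _ _ => by omega
  have cO₂ : q ^ (5 * (a + 2).toNat) *
      (q ^ (5 * (((2 * m : ℕ) : ℤ) - (a + 1)).toNat) * gaussBinomZ (q ^ 5) (2 * m) (a + 1)) =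
      q ^ (10 * m + 5) * (q ^ 0 * gaussBinomZ (q ^ 5) (2 * m) (a + 1)) :=
    pow_mul_pow_mul_gaussBinomZ_congr q fun _ _ => by omega
  have cO₃ : q ^ oddExp i *
      (q ^ (5 * (((2 * m : ℕ) : ℤ) - a).toNat) * gaussBinomZ (q ^ 5) (2 * m) a) =
      q ^ (5 * m + 3) * (q ^ evenExp i * gaussBinomZ (q ^ 5) (2 * m) a) :=
    pow_mul_pow_mul_gaussBinomZ_congr q fun _ _ => by omega
  rw [hE₁, hO₁, hE₃, hO₂]
  linear_combination q ^ evenExp i * hE₂ - q ^ oddExp i * hO₃ + cE₁ + q ^ evenExp i * cE₂ +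
    cE₃ - cO₁ - q ^ oddExp i * cO₂ - cO₃

theorem jacobiSum_succ (m : ℕ) :
    jacobiSum q (m + 1) = (1 - q ^ (5 * m + 2)) * (1 - q ^ (5 * m + 3)) * jacobiSum q m := by
  rw [jacobiSum_eq_sum_Icc (K := m + 1) (by omega), jacobiSum_eq_sum_Icc (K := m + 1) (by omega),
    mul_sum]
  have htel : ∑ i ∈ Icc (-((m : ℤ) + 1)) (m + 1),
      (jacobiTelescope q m i - jacobiTelescope q m (i + 1)) = 0 := by
    refine sum_Icc_sub_add_one_eq_zero (by omega) ?_ ?_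
    · rw [jacobiTelescope, gaussBinomZ_of_neg (by omega), gaussBinomZ_of_neg (by omega)]; simp
    · rw [jacobiTelescope, gaussBinomZ_of_lt (by omega), gaussBinomZ_of_lt (by omega)]; simp
  rw [sum_congr rfl fun i _ => jacobiTerm_succ m i, sum_add_distrib, htel, add_zero]

theorem jacobiSum_eq_prod (m : ℕ) :
    jacobiSum q m = ∏ k ∈ range m, ((1 - q ^ (5 * k + 2)) * (1 - q ^ (5 * k + 3))) := by
  induction m with
  | zero => simp [jacobiSum, jacobiTerm, evenExp, gaussBinomZ_of_lt]
  | succ m ih => rw [jacobiSum_succ, ih, prod_range_succ, mul_comm]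

variable (q) in
lemma prod_filter_not_mod_five (M : ℕ) :
    ∏ j ∈ (Icc 1 (5 * M)).filter (fun j => ¬(j % 5 = 1 ∨ j % 5 = 4)), (1 - q ^ j) =
      qPoch (q ^ 5) M * ∏ k ∈ range M, ((1 - q ^ (5 * k + 2)) * (1 - q ^ (5 * k + 3))) := by
  induction M with
  | zero => simp [qPoch]
  | succ M ih =>
    rw [prod_filter] at ih ⊢
    rw [show 5 * (M + 1) = 5 * M + 1 + 1 + 1 + 1 + 1 by ring, prod_Icc_succ_top (by omega),
      prod_Icc_succ_top (by omega), prod_Icc_succ_top (by omega), prod_Icc_succ_top (by omega),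
      prod_Icc_succ_top (by omega), ih, qPoch_succ, prod_range_succ]
    simp [Nat.add_mod]
    ring

end Identities

/-! ### Congruences modulo `X ^ (N + 1)` -/

section Truncation

variable {N : ℕ} {q : R⟦X⟧}

lemma coeff_eq_of_smodEq {A B : R⟦X⟧} (h : A ≡ B [SMOD Ideal.span {X ^ (N + 1)}]) :
    coeff N A = coeff N B := by
  have := SModEq.sub_mem.1 h
  rw [Ideal.mem_span_singleton, X_pow_dvd_iff] at this
  simpa [sub_eq_zero] using this N (by omega)

lemma smodEq_of_mul_left {u v A B : R⟦X⟧} (huv : v * u = 1)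
    (h : u * A ≡ u * B [SMOD Ideal.span {X ^ (N + 1)}]) :
    A ≡ B [SMOD Ideal.span {X ^ (N + 1)}] := by
  simpa [smul_eq_mul, ← mul_assoc, huv] using h.smul v

lemma pow_smodEq_zero {d e : ℕ} (hq : X ^ d ∣ q) (h : N < d * e) :
    q ^ e ≡ 0 [SMOD Ideal.span {X ^ (N + 1)}] :=
  SModEq.zero.2 <| Ideal.mem_span_singleton.2 <|
    (pow_dvd_pow (X : R⟦X⟧) h).trans (pow_mul (X : R⟦X⟧) d e ▸ pow_dvd_pow_of_dvd hq e)

lemma one_sub_pow_smodEq_one {d e : ℕ} (hq : X ^ d ∣ q) (h : N < d * e) :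
    1 - q ^ e ≡ 1 [SMOD Ideal.span {X ^ (N + 1)}] := by
  simpa using (SModEq.refl (1 : R⟦X⟧)).sub (pow_smodEq_zero hq h)

lemma prod_one_sub_pow_smodEq_one {ι : Type*} {s : Finset ι} {d : ℕ} {e : ι → ℕ}
    (hq : X ^ d ∣ q) (h : ∀ i ∈ s, N < d * e i) :
    ∏ i ∈ s, (1 - q ^ e i) ≡ 1 [SMOD Ideal.span {X ^ (N + 1)}] := by
  have := SModEq.prod (x := fun i => 1 - q ^ e i) (y := fun _ => 1) fun i hi =>
    one_sub_pow_smodEq_one (N := N) hq (h i hi)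
  rwa [prod_const_one] at this

lemma qPoch_smodEq_of_le {d k P : ℕ} (hq : X ^ d ∣ q) (hk : k ≤ P) (h : N < d * (k + 1)) :
    qPoch q P ≡ qPoch q k [SMOD Ideal.span {X ^ (N + 1)}] := by
  rw [← qPoch_mul_prod_Ioc q hk]
  simpa using (SModEq.refl (qPoch q k)).mul (prod_one_sub_pow_smodEq_one hq fun i hi =>
    h.trans_le (Nat.mul_le_mul_left d (mem_Ioc.1 hi).1))

lemma qPoch_mul_gaussBinom_smodEq_one {d n k : ℕ} (hq : X ^ d ∣ q) (hk : k ≤ n)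
    (h : N < d * (n - k + 1)) :
    qPoch q k * gaussBinom q n k ≡ 1 [SMOD Ideal.span {X ^ (N + 1)}] := by
  rw [qPoch_mul_gaussBinom q]
  exact prod_one_sub_pow_smodEq_one hq fun j hj => h.trans_le (Nat.mul_le_mul_left d (by
    have := mem_range.1 hj; omega))

lemma gaussBinom_smodEq {d n k : ℕ} {v : R⟦X⟧} (hq : X ^ d ∣ q) (hv : qPoch q k * v = 1)
    (hk : k ≤ n) (h : N < d * (n - k + 1)) :
    gaussBinom q n k ≡ v [SMOD Ideal.span {X ^ (N + 1)}] := by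
  rw [show gaussBinom q n k = v * (qPoch q k * gaussBinom q n k) by
    rw [← mul_assoc, mul_comm v, hv, one_mul]]
  simpa using (SModEq.refl v).mul (qPoch_mul_gaussBinom_smodEq_one hq hk h)

lemma qPoch_mul_X_pow_mul_gaussBinomZ_smodEq {d n P e : ℕ} {a : ℤ} (hq : X ^ d ∣ q)
    (h : e ≤ N → ∃ k : ℕ, a = k ∧ k ≤ n ∧ k ≤ P ∧ N < d * (k + 1) ∧ N < d * (n - k + 1)) :
    qPoch q P * (X ^ e * gaussBinomZ q n a) ≡ X ^ e [SMOD Ideal.span {X ^ (N + 1)}] := by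
  rw [mul_left_comm]
  rcases le_or_gt e N with he | he
  · obtain ⟨k, rfl, hk, hP, h₁, h₂⟩ := h he
    have h' := (qPoch_smodEq_of_le hq hP h₁).mul (SModEq.refl (gaussBinom q n k))
    simpa using (SModEq.refl (X ^ e)).mul (h'.trans (qPoch_mul_gaussBinom_smodEq_one hq hk h₂))
  · have h₀ := pow_smodEq_zero (q := (X : R⟦X⟧)) (d := 1) (by simp) (by omega : N < 1 * e)
    have h₁ := h₀.mul (SModEq.refl (qPoch q P * gaussBinomZ q n a))
    rw [zero_mul] at h₁
    exact h₁.trans h₀.symm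

variable (R) in
def theta (N : ℕ) : R⟦X⟧ := ∑ i ∈ Icc (-(N : ℤ)) N, (X ^ evenExp i - X ^ oddExp i)

lemma sum_Icc_smodEq_theta {K : ℤ} (hK : N ≤ K) :
    ∑ i ∈ Icc (-K) K, ((X : R⟦X⟧) ^ evenExp i - X ^ oddExp i) ≡ theta R N
      [SMOD Ideal.span {X ^ (N + 1)}] := by
  rw [theta, ← sum_sdiff (Icc_subset_Icc (by omega : -K ≤ -(N : ℤ)) (by omega : (N : ℤ) ≤ K))]
  have h : ∑ i ∈ Icc (-K) K \ Icc (-(N : ℤ)) N, ((X : R⟦X⟧) ^ evenExp i - X ^ oddExp i) ≡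
      ∑ i ∈ Icc (-K) K \ Icc (-(N : ℤ)) N, (0 - 0) [SMOD Ideal.span {X ^ (N + 1)}] := by
    refine SModEq.sum fun i hi => ?_
    simp only [mem_sdiff, mem_Icc, not_and_or, not_le] at hi
    refine (pow_smodEq_zero (d := 1) (by simp) ?_).sub (pow_smodEq_zero (d := 1) (by simp) ?_)
    · rw [one_mul]
      by_contra! he
      have := five_mul_le_of_evenExp_le he
      omega
    · rw [one_mul]
      by_contra! he
      have := five_mul_le_of_oddExp_le he
      omega
  simpa using h.add (SModEq.refl _)

theorem qPoch_mul_schurSum_smodEq_theta {n : ℕ} (hn : 4 * N + 4 ≤ n) :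
    qPoch X n * schurSum X n ≡ theta R N [SMOD Ideal.span {X ^ (N + 1)}] := by
  refine SModEq.trans ?_ (sum_Icc_smodEq_theta (K := n) (by omega))
  rw [schurSum, mul_sum]
  refine SModEq.sum fun i _ => ?_
  rw [schurTerm, mul_sub]
  refine (qPoch_mul_X_pow_mul_gaussBinomZ_smodEq (d := 1) (by simp) fun he => ?_).sub
    (qPoch_mul_X_pow_mul_gaussBinomZ_smodEq (d := 1) (by simp) fun he => ?_)
  · have := five_mul_le_of_evenExp_le he
    exact ⟨(((n / 2 : ℕ) : ℤ) - 5 * i).toNat, by omega, by omega, by omega, by omega, by omega⟩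
  · have := five_mul_le_of_oddExp_le he
    exact ⟨((((n + 1) / 2 : ℕ) : ℤ) - 3 - 5 * i).toNat, by omega, by omega, by omega, by omega,
      by omega⟩

theorem qPoch_mul_jacobiSum_smodEq_theta {m : ℕ} (hm : N < m) :
    qPoch (X ^ 5) (2 * m) * jacobiSum X m ≡ theta R N [SMOD Ideal.span {X ^ (N + 1)}] := by
  refine SModEq.trans ?_ (sum_Icc_smodEq_theta (K := m) (by omega))
  rw [jacobiSum, mul_sum]
  refine SModEq.sum fun i _ => ?_
  rw [jacobiTerm, mul_sub]
  refine (qPoch_mul_X_pow_mul_gaussBinomZ_smodEq (d := 5) dvd_rfl fun he => ?_).sub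
    (qPoch_mul_X_pow_mul_gaussBinomZ_smodEq (d := 5) dvd_rfl fun he => ?_)
  · have := five_mul_le_of_evenExp_le he
    exact ⟨((m : ℤ) + 2 * i).toNat, by omega, by omega, by omega, by omega, by omega⟩
  · have := five_mul_le_of_oddExp_le he
    exact ⟨((m : ℤ) + 2 * i + 1).toNat, by omega, by omega, by omega, by omega, by omega⟩

theorem prod_filter_not_mod_five_smodEq_theta (N : ℕ) :
    ∏ j ∈ (Icc 1 N).filter (fun j => ¬(j % 5 = 1 ∨ j % 5 = 4)), (1 - (X : R⟦X⟧) ^ j) ≡ theta R N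
      [SMOD Ideal.span {X ^ (N + 1)}] := by
  have hsub := filter_subset_filter (fun j => ¬(j % 5 = 1 ∨ j % 5 = 4))
    (Icc_subset_Icc_right (a := 1) (show N ≤ 5 * (N + 1) by omega))
  have hextra : ∏ j ∈ (Icc 1 (5 * (N + 1))).filter (fun j => ¬(j % 5 = 1 ∨ j % 5 = 4)) \
      (Icc 1 N).filter (fun j => ¬(j % 5 = 1 ∨ j % 5 = 4)), (1 - (X : R⟦X⟧) ^ j) ≡ 1
      [SMOD Ideal.span {X ^ (N + 1)}] :=
    prod_one_sub_pow_smodEq_one (d := 1) (by simp) fun j hj => by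
      simp only [mem_sdiff, mem_filter, mem_Icc] at hj; omega
  have h := hextra.mul (SModEq.refl (∏ j ∈ (Icc 1 N).filter (fun j => ¬(j % 5 = 1 ∨ j % 5 = 4)),
    (1 - (X : R⟦X⟧) ^ j)))
  rw [prod_sdiff hsub, one_mul, prod_filter_not_mod_five, ← jacobiSum_eq_prod] at h
  have hP := qPoch_smodEq_of_le (N := N) (q := (X : R⟦X⟧) ^ 5) (d := 5) dvd_rfl
    (show N + 1 ≤ 2 * (N + 1) by omega) (by omega)
  exact h.symm.trans ((hP.symm.mul (SModEq.refl (jacobiSum X (N + 1)))).trans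
    (qPoch_mul_jacobiSum_smodEq_theta (by omega)))

theorem qFibonacci_smodEq {v : ℕ → R⟦X⟧} (hv : ∀ k, qPoch X k * v k = 1) {n : ℕ}
    (hn : 3 * N ≤ n) :
    qFibonacci X n ≡ ∑ k ∈ (range (N + 1)).filter (fun k => k ^ 2 ≤ N), X ^ (k ^ 2) * v k
      [SMOD Ideal.span {X ^ (N + 1)}] := by
  have hsq : ∀ k, k ^ 2 ≤ N → k ≤ N := fun k hk => (Nat.le_self_pow two_ne_zero k).trans hk
  have hset : (range (N + 1)).filter (fun k => k ^ 2 ≤ N) =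
      (range (n + 1)).filter (fun k => k ^ 2 ≤ N) := by
    ext k
    simp only [mem_filter, mem_range]
    constructor <;> rintro ⟨h₁, h₂⟩ <;> exact ⟨by have := hsq k h₂; omega, h₂⟩
  rw [hset, sum_filter, qFibonacci]
  refine SModEq.sum fun k _ => ?_
  split_ifs with hk
  · have := hsq k hk
    exact (SModEq.refl _).mul (gaussBinom_smodEq (d := 1) (by simp) (hv k) (by omega) (by omega))
  · have h₀ := pow_smodEq_zero (q := (X : R⟦X⟧)) (d := 1) (by simp) (by omega : N < 1 * k ^ 2)
    simpa using h₀.mul (SModEq.refl (gaussBinom X (n - k) k))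

theorem qPoch_mul_sum_smodEq_theta {v : ℕ → R⟦X⟧} (hv : ∀ k, qPoch X k * v k = 1) :
    qPoch X N * ∑ k ∈ (range (N + 1)).filter (fun k => k ^ 2 ≤ N), X ^ (k ^ 2) * v k ≡ theta R N
      [SMOD Ideal.span {X ^ (N + 1)}] := by
  have hP := qPoch_smodEq_of_le (N := N) (q := (X : R⟦X⟧)) (d := 1) (k := N) (P := 4 * N + 4)
    (by simp) (by omega) (by omega)
  have h := hP.mul (qFibonacci_smodEq hv (show 3 * N ≤ 4 * N + 4 by omega))
  rw [← schurSum_eq_qFibonacci] at h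
  exact h.symm.trans (qPoch_mul_schurSum_smodEq_theta le_rfl)

end Truncation

end RogersRamanujan

end

open RogersRamanujan in
/-- first Rogers–Ramanujan identity, generating-function form,
coefficientwise.  In `ℤ⟦q⟧`, let `inv m` denote the inverse `(1 − q^m)⁻¹` of the unit
`1 − q^m` (`m ≥ 1`).  For every natural number `N`, the coefficient of `q^N` in
`∏_{1 ≤ m ≤ N, m ≡ 1 or 4 (mod 5)} (1 − q^m)⁻¹` equals
`∑_{n ≥ 0, n² ≤ N}` (coefficient of `q^N` in `q^{n²} · ∏_{i=1}^{n} (1 − q^i)⁻¹`). -/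
theorem statement10 (N : ℕ) (inv : ℕ → PowerSeries ℤ)
    (hinv : ∀ m : ℕ, 1 ≤ m → (1 - (X : PowerSeries ℤ) ^ m) * inv m = 1) :
    (coeff (R := ℤ) N)
      (∏ m ∈ (Finset.range (N + 1)).filter
        (fun m => 1 ≤ m ∧ (m % 5 = 1 ∨ m % 5 = 4)), inv m) =
    ∑ n ∈ (Finset.range (N + 1)).filter (fun n => n ^ 2 ≤ N),
      (coeff (R := ℤ) N) ((X : PowerSeries ℤ) ^ (n ^ 2) * ∏ i ∈ Finset.Icc 1 n, inv i) := by
  have hv : ∀ n, qPoch X n * ∏ i ∈ Icc 1 n, inv i = 1 := fun n => by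
    rw [qPoch, ← prod_mul_distrib]
    exact prod_eq_one fun i hi => hinv i (mem_Icc.1 hi).1
  have hS : (range (N + 1)).filter (fun m => 1 ≤ m ∧ (m % 5 = 1 ∨ m % 5 = 4)) =
      (Icc 1 N).filter (fun m => m % 5 = 1 ∨ m % 5 = 4) := by
    ext m; simp only [mem_filter, mem_range, mem_Icc]; omega
  have key := (qPoch_mul_prod_filter_inv (q := X) (N := N) (fun m => m % 5 = 1 ∨ m % 5 = 4) hinv ▸
    prod_filter_not_mod_five_smodEq_theta N).trans (qPoch_mul_sum_smodEq_theta hv).symm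
  rw [hS, coeff_eq_of_smodEq (smodEq_of_mul_left (by rw [mul_comm]; exact hv N) key), map_sum]
end

section
/- For every natural number N, Σ_{n ≥ 0, n² ≤ N} (coefficient of q^N in q^{n²} · ∏_{i=1}^{n} (1 − q^i)^{−1} ∈ ℤ⟦q⟧) equals the number of partitions of N whose successive parts differ by at least 2 (partitions b₁ ≥ b₂ ≥ ⋯ ≥ b_s of N with b_j − b_{j+1} ≥ 2 for all 1 ≤ j < s); that is, the sum side of the first Rogers–Ramanujan identity is the generating function of partitions satisfying the difference-two condition. -/
/-!
The product `∏_{i ≤ n} (1 - q^i)⁻¹` is the generating function of partitions into parts at most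
`n`, so the `n`-th summand counts partitions of `N - n²` into parts at most `n`. Conjugating such
a partition gives a weakly increasing sequence `c₀ ≤ ⋯ ≤ c_{n-1}` of naturals summing to `N - n²`,
and adding the staircase `1, 3, …, 2n - 1` turns it into `n` positive parts with successive
differences at least `2` summing to `N`. This is a bijection, and a difference-two partition with
`n` parts has `n² ≤ N`, so summing over `n` counts every difference-two partition of `N` once.
-/

open Finset PowerSeries

namespace Multiset

theorem countP_mono_left {α : Type*} {p q : α → Prop} [DecidablePred p] [DecidablePred q]
    (s : Multiset α) (h : ∀ a, p a → q a) : s.countP p ≤ s.countP q := by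
  simpa only [countP_eq_card_filter] using card_le_card (s.monotone_filter_right h)

theorem count_add_countP_succ_le (s : Multiset ℕ) (k : ℕ) :
    s.count k + s.countP (k + 1 ≤ ·) = s.countP (k ≤ ·) := by
  induction s using Multiset.induction with
  | empty => simp
  | cons a s ih =>
    simp only [countP_cons, count_cons]
    split_ifs <;> omega

theorem eq_of_countP_le_eq {s t : Multiset ℕ} (hs : 0 ∉ s) (ht : 0 ∉ t)
    (h : ∀ k, 1 ≤ k → s.countP (k ≤ ·) = t.countP (k ≤ ·)) : s = t := by
  ext k
  rcases Nat.eq_zero_or_pos k with rfl | hk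
  · rw [count_eq_zero.2 hs, count_eq_zero.2 ht]
  · have := h k hk
    have := h (k + 1) (by omega)
    have := s.count_add_countP_succ_le k
    have := t.count_add_countP_succ_le k
    omega

theorem sum_eq_sum_range_countP {s : Multiset ℕ} {n : ℕ} (hs : ∀ a ∈ s, a ≤ n) :
    s.sum = ∑ k ∈ Finset.range n, s.countP (k + 1 ≤ ·) := by
  induction s using Multiset.induction with
  | empty => simp
  | cons a s ih =>
    have hcount : ∑ k ∈ Finset.range n, (if k + 1 ≤ a then 1 else 0) = a := by
      have ha := hs a (mem_cons_self a s)
      rw [sum_boole, Nat.cast_id]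
      convert Finset.card_range a using 2
      ext k
      simp only [Finset.mem_filter, Finset.mem_range]
      omega
    simp only [countP_cons, sum_cons, Finset.sum_add_distrib, hcount]
    rw [ih fun b hb ↦ hs b (mem_cons_of_mem hb), add_comm]

theorem countP_sum_replicate {ι : Type*} (p : ℕ → Prop) [DecidablePred p] (t : Finset ι)
    (m v : ι → ℕ) :
    (∑ i ∈ t, replicate (m i) (v i)).countP p = ∑ i ∈ t with p (v i), m i := by
  rw [← coe_countPAddMonoidHom, map_sum, Finset.sum_filter]
  simp [← coe_replicate, List.countP_replicate]

end Multiset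

theorem List.sum_eq_sum_range_getD (l : List ℕ) :
    l.sum = ∑ j ∈ Finset.range l.length, l.getD j 0 := by
  rw [← Fin.sum_univ_getElem, Finset.sum_range]
  simp

theorem Finset.sum_range_two_mul_add_one (n : ℕ) : ∑ j ∈ range n, (2 * j + 1) = n ^ 2 := by
  induction n with
  | zero => rfl
  | succ n ih => rw [sum_range_succ, ih]; ring

namespace Nat.Partition

theorem mem_restricted {n : ℕ} {p : ℕ → Prop} [DecidablePred p] {q : n.Partition} :
    q ∈ restricted n p ↔ ∀ i ∈ q.parts, p i := by
  simp [restricted]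

theorem one_le_of_mem_sort {N x : ℕ} {q : N.Partition} (hx : x ∈ q.parts.sort (· ≤ ·)) : 1 ≤ x :=
  q.parts_pos ((Multiset.mem_sort _).1 hx)

theorem sum_sort {N : ℕ} (q : N.Partition) : (q.parts.sort (· ≤ ·)).sum = N := by
  rw [← Multiset.sum_coe, Multiset.sort_eq, q.parts_sum]

section PowerSeries

open scoped PowerSeries.WithPiTopology

theorem mk_card_restricted_le_mul_prod_one_sub_X_pow (R : Type*) [CommRing R] (n : ℕ) :
    PowerSeries.mk (fun M ↦ (#(restricted M (· ≤ n)) : R)) * ∏ i ∈ Icc 1 n, (1 - X ^ i) = 1 := by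
  -- `hasProd_powerSeriesMk_card_restricted` needs a topology on `R`: the discrete one will do,
  -- and all but `n` factors of the infinite product are `1`.
  let _ : TopologicalSpace R := ⊥
  have _ : DiscreteTopology R := ⟨rfl⟩
  rw [← (hasProd_powerSeriesMk_card_restricted R (· ≤ n)).tprod_eq,
    tprod_eq_prod (s := range n) (fun i hi ↦ by simp_all), ← Finset.Ico_succ_right_eq_Icc,
    Order.succ_eq_add_one, prod_Ico_eq_prod_range, Nat.add_sub_cancel, ← prod_mul_distrib]
  refine prod_eq_one fun i hi ↦ ?_
  rw [if_pos (by simp at hi; omega), add_comm 1 i]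
  simp_rw [pow_mul]
  exact WithPiTopology.tsum_pow_mul_one_sub_of_constantCoeff_eq_zero (by simp)

theorem coeff_prod_eq_card_restricted {R : Type*} [CommRing R] {inv : ℕ → R⟦X⟧}
    (hinv : ∀ i, 1 ≤ i → (1 - X ^ i) * inv i = 1) (n M : ℕ) :
    coeff M (∏ i ∈ Icc 1 n, inv i) = #(restricted M (· ≤ n)) := by
  have hG := mk_card_restricted_le_mul_prod_one_sub_X_pow R n
  set G := PowerSeries.mk fun M ↦ (#(restricted M (· ≤ n)) : R)
  have : ∏ i ∈ Icc 1 n, inv i = G := calc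
    ∏ i ∈ Icc 1 n, inv i = G * (∏ i ∈ Icc 1 n, (1 - X ^ i)) * ∏ i ∈ Icc 1 n, inv i := by
      rw [hG, one_mul]
    _ = G * ∏ i ∈ Icc 1 n, ((1 - X ^ i) * inv i) := by rw [prod_mul_distrib, mul_assoc]
    _ = G := by rw [prod_eq_one fun i hi ↦ hinv i (mem_Icc.1 hi).1, mul_one]
  rw [this, coeff_mk]

end PowerSeries

end Nat.Partition

namespace RogersRamanujan

/-- The conjugate of `s`, padded with zeros to `n` parts and listed in increasing order, plus the
staircase `1, 3, …, 2n - 1`. -/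
def diffTwoList (n : ℕ) (s : Multiset ℕ) : List ℕ :=
  (List.range n).map fun j ↦ s.countP (n - j ≤ ·) + (2 * j + 1)

section diffTwoList

variable (n : ℕ) (s : Multiset ℕ)

@[simp]
theorem length_diffTwoList : (diffTwoList n s).length = n := by
  simp [diffTwoList]

theorem getD_diffTwoList {j : ℕ} (hj : j < n) :
    (diffTwoList n s).getD j 0 = s.countP (n - j ≤ ·) + (2 * j + 1) := by
  simp [diffTwoList, hj]

theorem isChain_diffTwoList : (diffTwoList n s).IsChain (· + 2 ≤ ·) := by
  rw [diffTwoList, List.isChain_map]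
  cases n with
  | zero => simp
  | succ n =>
    refine (List.isChain_range_succ _ n).2 fun j hj ↦ ?_
    have : s.countP (n + 1 - j ≤ ·) ≤ s.countP (n - j ≤ ·) :=
      s.countP_mono_left fun a ha ↦ by omega
    simp only [Nat.succ_eq_add_one, Nat.add_sub_add_right]
    omega

theorem one_le_of_mem_diffTwoList {x : ℕ} (hx : x ∈ diffTwoList n s) : 1 ≤ x := by
  obtain ⟨j, -, rfl⟩ := List.mem_map.1 hx
  omega

theorem sum_diffTwoList (hs : ∀ a ∈ s, a ≤ n) :
    (diffTwoList n s).sum = s.sum + n ^ 2 := by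
  change ∑ j ∈ range n, (s.countP (n - j ≤ ·) + (2 * j + 1)) = _
  rw [sum_add_distrib, sum_range_two_mul_add_one, Multiset.sum_eq_sum_range_countP hs,
    ← sum_range_reflect]
  congr 1
  refine sum_congr rfl fun j hj ↦ ?_
  congr! 2
  simp at hj
  omega

end diffTwoList

def excess (l : List ℕ) (j : ℕ) : ℕ := l.getD j 0 - (2 * j + 1)

def gap (l : List ℕ) : ℕ → ℕ
  | 0 => excess l 0
  | j + 1 => excess l (j + 1) - excess l j

/-- The inverse of `diffTwoList`: `gap l j = l[j] - l[j-1] - 2` (read `l[-1] = -1`) is the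
multiplicity of the part `l.length - j`. -/
def partsOfDiffTwo (l : List ℕ) : Multiset ℕ :=
  ∑ j ∈ range l.length, Multiset.replicate (gap l j) (l.length - j)

theorem mem_partsOfDiffTwo {l : List ℕ} {x : ℕ} (hx : x ∈ partsOfDiffTwo l) :
    1 ≤ x ∧ x ≤ l.length := by
  obtain ⟨j, hj, hx⟩ := Multiset.mem_sum.1 hx
  rw [Multiset.eq_of_mem_replicate hx]
  simp only [mem_range] at hj
  omega

theorem excess_diffTwoList (n : ℕ) (s : Multiset ℕ) {j : ℕ} (hj : j < n) :
    excess (diffTwoList n s) j = s.countP (n - j ≤ ·) := by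
  rw [excess, getD_diffTwoList n s hj, Nat.add_sub_cancel]

section partsOfDiffTwo

variable {l : List ℕ} (hl : l.IsChain (· + 2 ≤ ·)) (hpos : ∀ x ∈ l, 1 ≤ x)
include hl hpos

theorem two_mul_add_one_le_getElem (j : ℕ) (hj : j < l.length) : 2 * j + 1 ≤ l[j] := by
  induction j with
  | zero => exact hpos _ (List.getElem_mem _)
  | succ j ih =>
    have := List.isChain_iff_getElem.1 hl j hj
    have := ih (by omega)
    omega

theorem excess_add_two_mul_add_one {j : ℕ} (hj : j < l.length) :
    excess l j + (2 * j + 1) = l.getD j 0 := by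
  rw [excess, List.getD_eq_getElem _ _ hj]
  have := two_mul_add_one_le_getElem hl hpos j hj
  omega

theorem sum_range_gap {j : ℕ} (hj : j < l.length) : ∑ i ∈ range (j + 1), gap l i = excess l j := by
  induction j with
  | zero => rfl
  | succ j ih =>
    rw [sum_range_succ, ih (by omega), gap]
    have := List.isChain_iff_getElem.1 hl j hj
    have := excess_add_two_mul_add_one hl hpos hj
    have := excess_add_two_mul_add_one hl hpos (j := j) (by omega)
    rw [List.getD_eq_getElem _ _ hj, List.getD_eq_getElem _ _ (by omega)] at *
    omega

theorem countP_le_partsOfDiffTwo {k : ℕ} (hk₁ : 1 ≤ k) (hk : k ≤ l.length) :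
    (partsOfDiffTwo l).countP (k ≤ ·) = excess l (l.length - k) := by
  rw [partsOfDiffTwo, Multiset.countP_sum_replicate,
    show {j ∈ range l.length | k ≤ l.length - j} = range (l.length - k + 1) by ext; simp; omega]
  exact sum_range_gap hl hpos (by omega)

theorem diffTwoList_partsOfDiffTwo : diffTwoList l.length (partsOfDiffTwo l) = l := by
  refine List.ext_getElem (length_diffTwoList _ _) fun j hj hj' ↦ ?_
  rw [← List.getD_eq_getElem _ 0, ← List.getD_eq_getElem _ 0, getD_diffTwoList _ _ hj',
    countP_le_partsOfDiffTwo hl hpos (by omega) (by omega), Nat.sub_sub_self hj'.le,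
    excess_add_two_mul_add_one hl hpos hj']

theorem sum_partsOfDiffTwo : (partsOfDiffTwo l).sum + l.length ^ 2 = l.sum := by
  rw [Multiset.sum_eq_sum_range_countP fun x hx ↦ (mem_partsOfDiffTwo hx).2,
    ← sum_range_reflect, ← sum_range_two_mul_add_one, ← sum_add_distrib, l.sum_eq_sum_range_getD]
  refine sum_congr rfl fun j hj ↦ ?_
  rw [mem_range] at hj
  rw [countP_le_partsOfDiffTwo hl hpos (by omega) (by omega),
    show l.length - (l.length - 1 - j + 1) = j by omega, excess_add_two_mul_add_one hl hpos hj]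

end partsOfDiffTwo

theorem partsOfDiffTwo_diffTwoList {n : ℕ} {s : Multiset ℕ} (hs : ∀ a ∈ s, 1 ≤ a ∧ a ≤ n) :
    partsOfDiffTwo (diffTwoList n s) = s := by
  refine Multiset.eq_of_countP_le_eq (fun h ↦ by simpa using (mem_partsOfDiffTwo h).1)
    (fun h ↦ by simpa using (hs 0 h).1) fun k hk ↦ ?_
  rcases le_or_gt k n with hkn | hkn
  · rw [countP_le_partsOfDiffTwo (isChain_diffTwoList n s) (fun _ ↦ one_le_of_mem_diffTwoList n s)
      hk (by simpa), length_diffTwoList, excess_diffTwoList _ _ (by omega), Nat.sub_sub_self hkn]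
  · rw [Multiset.countP_eq_zero.2, Multiset.countP_eq_zero.2]
    · exact fun a ha ↦ by have := (hs a ha).2; omega
    · exact fun a ha ↦ by have := (mem_partsOfDiffTwo ha).2; simp at this; omega

theorem sort_diffTwoList (n : ℕ) (s : Multiset ℕ) :
    (diffTwoList n s : Multiset ℕ).sort (· ≤ ·) = diffTwoList n s := by
  rw [Multiset.coe_sort, List.mergeSort_eq_self]
  exact List.isChain_iff_pairwise.1 <| (isChain_diffTwoList n s).imp fun a b h ↦ by omega

theorem card_restricted_le_eq_card_isChain_card_eq {N n : ℕ} (hn : n ^ 2 ≤ N) :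
    #(Nat.Partition.restricted (N - n ^ 2) (· ≤ n)) =
      #{q : N.Partition | (q.parts.sort (· ≤ ·)).IsChain (· + 2 ≤ ·) ∧ q.parts.card = n} := by
  refine card_bij' (fun p hp ↦ ⟨diffTwoList n p.parts, fun h ↦ one_le_of_mem_diffTwoList n _ h, ?_⟩)
    (fun q hq ↦ ⟨partsOfDiffTwo (q.parts.sort (· ≤ ·)), fun h ↦ (mem_partsOfDiffTwo h).1, ?_⟩)
    ?_ ?_ ?_ ?_
  · rw [Multiset.sum_coe, sum_diffTwoList n _ (Nat.Partition.mem_restricted.1 hp), p.parts_sum]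
    omega
  · obtain ⟨hchain, hcard⟩ := (mem_filter.1 hq).2
    have := sum_partsOfDiffTwo hchain fun _ ↦ q.one_le_of_mem_sort
    rw [Multiset.length_sort, hcard, q.sum_sort] at this
    omega
  · intro p _
    simp only [mem_filter, mem_univ, true_and, sort_diffTwoList, Multiset.coe_card,
      length_diffTwoList, and_true]
    exact isChain_diffTwoList n p.parts
  · intro q hq
    obtain ⟨-, hcard⟩ := (mem_filter.1 hq).2
    refine Nat.Partition.mem_restricted.2 fun x hx ↦ ?_
    simpa [hcard] using (mem_partsOfDiffTwo hx).2
  · intro p hp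
    ext1
    dsimp only
    rw [sort_diffTwoList, partsOfDiffTwo_diffTwoList fun a ha ↦
      ⟨p.parts_pos ha, Nat.Partition.mem_restricted.1 hp a ha⟩]
  · intro q hq
    obtain ⟨hchain, rfl⟩ := (mem_filter.1 hq).2
    ext1
    dsimp only
    rw [← Multiset.length_sort (· ≤ ·),
      diffTwoList_partsOfDiffTwo hchain fun _ ↦ q.one_le_of_mem_sort, Multiset.sort_eq]

theorem card_isChain_eq_sum_card_isChain_card_eq (N : ℕ) :
    #{q : N.Partition | (q.parts.sort (· ≤ ·)).IsChain (· + 2 ≤ ·)} =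
      ∑ n ∈ (range (N + 1)).filter (fun n ↦ n ^ 2 ≤ N),
        #{q : N.Partition | (q.parts.sort (· ≤ ·)).IsChain (· + 2 ≤ ·) ∧ q.parts.card = n} := by
  rw [card_eq_sum_card_fiberwise (f := fun q : N.Partition ↦ q.parts.card)
    (t := (range (N + 1)).filter (fun n ↦ n ^ 2 ≤ N)) fun q hq ↦ ?_]
  · simp_rw [filter_filter]
  · have := sum_partsOfDiffTwo (mem_filter.1 hq).2 fun _ ↦ q.one_le_of_mem_sort
    rw [Multiset.length_sort, q.sum_sort] at this
    have := Nat.le_self_pow two_ne_zero q.parts.card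
    simp only [coe_filter, Set.mem_ofPred_eq, mem_range]
    omega

end RogersRamanujan

/-- In `ℤ⟦q⟧`, let `inv i` denote the inverse `(1 − q^i)⁻¹` of the
unit `1 − q^i` (`i ≥ 1`).  For every natural number `N`,
`∑_{n ≥ 0, n² ≤ N}` (coefficient of `q^N` in `q^{n²} · ∏_{i=1}^{n} (1 − q^i)⁻¹`) equals
the number of partitions of `N` whose successive parts differ by at least `2`
(`b₁ ≥ ⋯ ≥ b_s` with `b_j − b_{j+1} ≥ 2`; equivalently the increasing sorted list of
parts satisfies `a + 2 ≤ b` for consecutive entries): the sum side of the first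
Rogers–Ramanujan identity is the generating function of partitions satisfying the
difference-two condition. -/
theorem statement11 (N : ℕ) (inv : ℕ → PowerSeries ℤ)
    (hinv : ∀ i : ℕ, 1 ≤ i → (1 - (X : PowerSeries ℤ) ^ i) * inv i = 1) :
    ∑ n ∈ (Finset.range (N + 1)).filter (fun n => n ^ 2 ≤ N),
      (coeff N) ((X : PowerSeries ℤ) ^ (n ^ 2) * ∏ i ∈ Finset.Icc 1 n, inv i) =
    (Nat.card {p : N.Partition //
      (p.parts.sort (· ≤ ·)).Chain' fun a b => a + 2 ≤ b} : ℤ) := by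
  have hsummand : ∀ n ∈ (range (N + 1)).filter (fun n => n ^ 2 ≤ N),
      coeff N ((X : ℤ⟦X⟧) ^ (n ^ 2) * ∏ i ∈ Icc 1 n, inv i) =
        #(Nat.Partition.restricted (N - n ^ 2) (· ≤ n)) := fun n hn ↦ by
    rw [coeff_X_pow_mul', if_pos (mem_filter.1 hn).2,
      Nat.Partition.coeff_prod_eq_card_restricted hinv]
  unfold List.Chain'
  rw [sum_congr rfl hsummand, Nat.card_eq_fintype_card, Fintype.card_subtype,
    RogersRamanujan.card_isChain_eq_sum_card_isChain_card_eq]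
  push_cast
  exact sum_congr rfl fun n hn ↦ by
    rw [RogersRamanujan.card_restricted_le_eq_card_isChain_card_eq (mem_filter.1 hn).2]
end

section
/- The three-term formal delta function identity underlying the Jacobi identity for vertex operator algebras: F₁ − F₂ = F₃ as functions ℤ³ → ℤ. Explicitly, for all (r, s, t) ∈ ℤ³: if r + s + t ≠ −1 then all three vanish and the identity is trivial, and if r + s + t = −1 then [t ≥ 0] · (−1)^t · C(−r−1, t) − [s ≥ 0] · (−1)^t · C(−r−1, s) = [r ≥ 0] · (−1)^r · C(−t−1, r), where [P] is 1 if P holds and 0 otherwise. -/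
/-!
For `n ∈ ℤ` and `k ∈ ℕ`, `Ring.choose n k = (n(n−1)⋯(n−k+1))/k! ∈ ℤ` is the generalized
binomial coefficient.  A formal series `∑ a(r,s,t) x₀^r x₁^s x₂^t` in three commuting
formal variables with doubly infinite integer exponents is identified with its
coefficient function `a : ℤ³ → ℤ`.  With the convention that each binomial `(u ± v)^n`
is expanded in nonnegative integral powers of the second listed summand, the three
series `x₀⁻¹δ((x₁−x₂)/x₀)`, `x₀⁻¹δ((−x₂+x₁)/x₀)` and `x₂⁻¹δ((x₁−x₀)/x₂)` have the
following coefficient functions `F₁`, `F₂`, `F₃`.  (Since the exponents involved may be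
negative, `(−1)^m` for `m : ℤ` is rendered as `(−1)^m.natAbs`.)
-/

/-- Coefficient function of `x₀⁻¹δ((x₁−x₂)/x₀) = ∑_{n∈ℤ} (x₁−x₂)^n x₀^{−n−1}`. -/
def F₁ (r s t : ℤ) : ℤ :=
  if 0 ≤ t ∧ s + t = -r - 1 then (-1) ^ t.natAbs * Ring.choose (-r - 1) t.toNat else 0

/-- Coefficient function of `x₀⁻¹δ((−x₂+x₁)/x₀) = ∑_{n∈ℤ} (−x₂+x₁)^n x₀^{−n−1}`. -/
def F₂ (r s t : ℤ) : ℤ :=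
  if 0 ≤ s ∧ s + t = -r - 1 then (-1) ^ t.natAbs * Ring.choose (-r - 1) s.toNat else 0

/-- Coefficient function of `x₂⁻¹δ((x₁−x₀)/x₂) = ∑_{n∈ℤ} (x₁−x₀)^n x₂^{−n−1}`. -/
def F₃ (r s t : ℤ) : ℤ :=
  if 0 ≤ r ∧ r + s = -t - 1 then (-1) ^ r.natAbs * Ring.choose (-t - 1) r.toNat else 0

/-!
On the plane `r + s + t = -1` at most two of `r, s, t` are nonnegative. If only one is, the
surviving coefficient is some `C(n, k)` with `0 ≤ n < k`, hence zero. If two are, the upper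
negation `C(-n-1, k) = (-1)^k C(n+k, k)` turns every surviving coefficient into an ordinary
binomial coefficient, and the identity becomes the symmetry `C(a+b, a) = C(a+b, b)` up to signs.
-/

theorem Ring.choose_neg_natCast_sub_one (n k : ℕ) :
    Ring.choose (-(n : ℤ) - 1) k = (-1) ^ k * (n + k).choose k := by
  rw [← neg_add', Ring.choose_neg, Units.smul_def, Int.coe_negOnePow_natCast,
    show (n : ℤ) + 1 + k - 1 = ((n + k : ℕ) : ℤ) by push_cast; ring, Ring.choose_natCast]
  rfl

theorem Ring.choose_eq_zero_of_nonneg_of_lt {n : ℤ} {k : ℕ} (h₀ : 0 ≤ n) (h : n < k) :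
    Ring.choose n k = 0 := by
  lift n to ℕ using h₀
  rw [Ring.choose_natCast, Nat.choose_eq_zero_of_lt (by omega), Nat.cast_zero]

theorem choose_three_term_identity {r s t : ℤ} (h : r + s + t = -1) :
    (if 0 ≤ t then (-1) ^ t.natAbs * Ring.choose (-r - 1) t.toNat else 0)
      - (if 0 ≤ s then (-1) ^ t.natAbs * Ring.choose (-r - 1) s.toNat else 0)
      = (if 0 ≤ r then (-1) ^ r.natAbs * Ring.choose (-t - 1) r.toNat else 0) := by
  split_ifs with ht hs hr hr hs hr hr
  · omega
  · lift s to ℕ using hs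
    lift t to ℕ using ht
    rw [show -r - 1 = ((s + t : ℕ) : ℤ) by push_cast; omega, Int.toNat_natCast, Int.toNat_natCast,
      Ring.choose_natCast, Ring.choose_natCast, Nat.choose_symm_add, sub_self]
  · lift r to ℕ using hr
    lift t to ℕ using ht
    rw [Int.toNat_natCast, Int.toNat_natCast, Int.natAbs_natCast, Int.natAbs_natCast, sub_zero,
      Ring.choose_neg_natCast_sub_one, Ring.choose_neg_natCast_sub_one, ← mul_assoc, ← mul_assoc,
      ← pow_add, ← pow_add, Even.neg_one_pow ⟨_, rfl⟩, Even.neg_one_pow ⟨_, rfl⟩, add_comm r t,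
      Nat.choose_symm_add]
  · rw [Ring.choose_eq_zero_of_nonneg_of_lt (by omega) (by omega)]; ring
  · -- the sign works out because `(-1)^(r+s+1) * (-1)^s = -(-1)^r`
    lift r to ℕ using hr
    lift s to ℕ using hs
    rw [show -t - 1 = ((r + s : ℕ) : ℤ) by push_cast; omega, show t.natAbs = r + s + 1 by omega,
      Int.toNat_natCast, Int.toNat_natCast, Int.natAbs_natCast, Ring.choose_natCast,
      Ring.choose_neg_natCast_sub_one, ← Nat.choose_symm_add, zero_sub, ← mul_assoc, ← pow_add,
      show r + s + 1 + s = r + 1 + (s + s) by ring, pow_add _ (r + 1), Even.neg_one_pow ⟨_, rfl⟩,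
      pow_succ]
    ring
  · rw [Ring.choose_eq_zero_of_nonneg_of_lt (by omega) (by omega)]; ring
  · rw [Ring.choose_eq_zero_of_nonneg_of_lt (by omega) (by omega)]; ring
  · omega

section DeltaCoefficients

variable {r s t : ℤ}

theorem F₁_of_add_add_eq (h : r + s + t = -1) :
    F₁ r s t = if 0 ≤ t then (-1) ^ t.natAbs * Ring.choose (-r - 1) t.toNat else 0 := by
  simp only [F₁, show s + t = -r - 1 by omega, and_true]

theorem F₂_of_add_add_eq (h : r + s + t = -1) :
    F₂ r s t = if 0 ≤ s then (-1) ^ t.natAbs * Ring.choose (-r - 1) s.toNat else 0 := by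
  simp only [F₂, show s + t = -r - 1 by omega, and_true]

theorem F₃_of_add_add_eq (h : r + s + t = -1) :
    F₃ r s t = if 0 ≤ r then (-1) ^ r.natAbs * Ring.choose (-t - 1) r.toNat else 0 := by
  simp only [F₃, show r + s = -t - 1 by omega, and_true]

theorem F₁_eq_zero (h : r + s + t ≠ -1) : F₁ r s t = 0 := if_neg (by omega)

theorem F₂_eq_zero (h : r + s + t ≠ -1) : F₂ r s t = 0 := if_neg (by omega)

theorem F₃_eq_zero (h : r + s + t ≠ -1) : F₃ r s t = 0 := if_neg (by omega)

end DeltaCoefficients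

/-- the three-term formal delta function identity underlying the
Jacobi identity for vertex operator algebras: `F₁ − F₂ = F₃` as functions `ℤ³ → ℤ`.
Explicitly: if `r + s + t ≠ −1` then all three vanish, and if `r + s + t = −1` then
`[t ≥ 0]·(−1)^t·C(−r−1,t) − [s ≥ 0]·(−1)^t·C(−r−1,s) = [r ≥ 0]·(−1)^r·C(−t−1,r)`. -/
theorem statement12 :
    (∀ r s t : ℤ, F₁ r s t - F₂ r s t = F₃ r s t) ∧
    (∀ r s t : ℤ, r + s + t ≠ -1 → F₁ r s t = 0 ∧ F₂ r s t = 0 ∧ F₃ r s t = 0) ∧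
    (∀ r s t : ℤ, r + s + t = -1 →
      (if 0 ≤ t then (-1) ^ t.natAbs * Ring.choose (-r - 1) t.toNat else 0)
        - (if 0 ≤ s then (-1) ^ t.natAbs * Ring.choose (-r - 1) s.toNat else 0)
      = (if 0 ≤ r then (-1) ^ r.natAbs * Ring.choose (-t - 1) r.toNat else 0)) := by
  refine ⟨fun r s t => ?_, fun r s t h => ⟨F₁_eq_zero h, F₂_eq_zero h, F₃_eq_zero h⟩,
    fun r s t h => choose_three_term_identity h⟩
  by_cases h : r + s + t = -1
  · rw [F₁_of_add_add_eq h, F₂_of_add_add_eq h, F₃_of_add_add_eq h]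
    exact choose_three_term_identity h
  · rw [F₁_eq_zero h, F₂_eq_zero h, F₃_eq_zero h, sub_zero]
end
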